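/- (Wintner's Dream Theorem) Let F: ℕ → ℂ with Eratosthenes transform F' = F ∗ μ satisfy the Wintner Assumption ∑_{d=1}^∞ |F'(d)|/d < ∞. Then for every a ∈ ℕ, the P-smooth partial sums of the Ramanujan expansion with Wintner coefficients converge to F(a): lim_{P→∞, P prime} ∑_{q P-smooth} (Win_q F) · c_q(a) = F(a), where Win_q F = ∑_{d ≡ 0 mod q} F'(d)/d. -/

import Mathlib

/-!
For fixed `P`, a `P`-smooth `q` with `c_q(a) ≠ 0` divides `a · P#`, so the sum over `q` is finite
and can be exchanged with the series defining `Win_q F`. Since `∑_{q ∣ m} c_q(a) = m · [m ∣ a]`,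
the coefficient of `F'(d)/d` becomes `d_P · [d_P ∣ a]`, where `d_P` is the `P`-smooth part of `d`.
These terms are dominated by `a · |F'(d)|/d` and become `F'(d) · [d ∣ a]` once `P ≥ d`, so by
Tannery's theorem the sums tend to `∑_{d ∣ a} F'(d) = F(a)`.
-/

open scoped BigOperators Classical
open Filter

/-- `n` is `P`-smooth: every prime factor of `n` is at most `P`. -/
def IsSmooth (P n : ℕ) : Prop := ∀ p : ℕ, p.Prime → p ∣ n → p ≤ P

/-- The Ramanujan sum `c_q(a)`, via Kluyver's formula. -/
noncomputable def ramanujanSum (q a : ℕ) : ℤ :=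
  ∑ d ∈ (Nat.gcd a q).divisors, (d : ℤ) * ArithmeticFunction.moebius (q / d)

/-- The Eratosthenes transform `F' = F ∗ μ`. -/
noncomputable def eratosthenes (F : ℕ → ℂ) (d : ℕ) : ℂ :=
  ∑ e ∈ d.divisors, (ArithmeticFunction.moebius (d / e) : ℂ) * F e

/-- The Wintner coefficient `Win_q F = ∑_{d ≡ 0 mod q} F'(d)/d`. -/
noncomputable def winCoeff (F : ℕ → ℂ) (q : ℕ) : ℂ :=
  ∑' d : ℕ, if q ∣ d then eratosthenes F d / d else 0

open ArithmeticFunction Finset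

lemma eratosthenes_zero (F : ℕ → ℂ) : eratosthenes F 0 = 0 := by
  simp [eratosthenes]

lemma sum_divisors_eratosthenes (F : ℕ → ℂ) {n : ℕ} (hn : n ≠ 0) :
    ∑ d ∈ n.divisors, eratosthenes F d = F n := by
  refine sum_eq_iff_sum_mul_moebius_eq.mpr (fun m _ => ?_) n (Nat.pos_of_ne_zero hn)
  rw [eratosthenes, Nat.sum_divisorsAntidiagonal' (fun x y => (moebius x : ℂ) * F y)]

lemma sum_divisors_ramanujanSum (a m : ℕ) (hm : m ≠ 0) :
    ∑ q ∈ m.divisors, ramanujanSum q a = if m ∣ a then (m : ℤ) else 0 := by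
  refine (sum_eq_iff_sum_mul_moebius_eq (f := fun q => ramanujanSum q a)
    (g := fun m => if m ∣ a then (m : ℤ) else 0)).mpr (fun q hq => ?_) m (Nat.pos_of_ne_zero hm)
  simp only [Int.cast_id]
  rw [Nat.sum_divisorsAntidiagonal' (fun x y => moebius x * if y ∣ a then (y : ℤ) else 0),
    ramanujanSum, ← Nat.divisors_filter_dvd_of_dvd hq.ne' (Nat.gcd_dvd_right a q), sum_filter]
  refine sum_congr rfl fun e he => ?_
  have heq : e ∣ q := Nat.dvd_of_mem_divisors he
  simp only [Nat.dvd_gcd_iff, heq, and_true]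
  split_ifs <;> simp [mul_comm]

lemma ramanujanSum_eq_zero_of_factorization_lt {a q p : ℕ} (ha : a ≠ 0)
    (h : a.factorization p + 1 < q.factorization p) : ramanujanSum q a = 0 := by
  have hq : q ≠ 0 := by rintro rfl; simp at h
  refine sum_eq_zero fun e he => ?_
  have hea : e ∣ a := (Nat.dvd_of_mem_divisors he).trans (Nat.gcd_dvd_left a q)
  have heq : e ∣ q := (Nat.dvd_of_mem_divisors he).trans (Nat.gcd_dvd_right a q)
  have hve : e.factorization p ≤ a.factorization p :=
    (Nat.factorization_le_iff_dvd (ne_zero_of_dvd_ne_zero ha hea) ha).mpr hea p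
  have hqe : ¬ Squarefree (q / e) := by
    rw [Nat.squarefree_iff_factorization_le_one (Nat.div_ne_zero_iff_of_dvd heq |>.mpr ⟨hq, ?_⟩)]
    · simp only [Nat.factorization_div heq, Finsupp.tsub_apply, not_forall, not_le]
      exact ⟨p, by omega⟩
    · exact ne_zero_of_dvd_ne_zero ha hea
  simp [moebius_eq_zero_of_not_squarefree hqe]

lemma ramanujanSum_eq_zero_of_not_dvd_mul_primorial {P a q : ℕ} (ha : a ≠ 0) (hq : q ≠ 0)
    (hsm : IsSmooth P q) (hqN : ¬ q ∣ a * primorial P) : ramanujanSum q a = 0 := by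
  rw [← Nat.factorization_le_iff_dvd hq (mul_ne_zero ha (primorial_ne_zero P)),
    Nat.factorization_mul ha (primorial_ne_zero P), Finsupp.le_iff] at hqN
  simp only [not_forall, not_le] at hqN
  obtain ⟨p, hpq, hlt⟩ := hqN
  have hpr : p.Prime := Nat.prime_of_mem_primeFactors hpq
  have hprim : 1 ≤ (primorial P).factorization p :=
    (hpr.dvd_iff_one_le_factorization (primorial_ne_zero P)).mp
      (hpr.dvd_primorial_iff.mpr (hsm p hpr (Nat.dvd_of_mem_primeFactors hpq)))
  refine ramanujanSum_eq_zero_of_factorization_lt (p := p) ha ?_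
  simp only [Finsupp.add_apply] at hlt
  omega

lemma isSmooth_iff_forall_mem_primeFactors {P q : ℕ} (hq : q ≠ 0) :
    IsSmooth P q ↔ ∀ p ∈ q.primeFactors, p ≤ P := by
  simp only [IsSmooth, Nat.mem_primeFactors, hq, ne_eq, not_false_eq_true, and_true, and_imp]

noncomputable def smoothPart (P d : ℕ) : ℕ :=
  (d.factorization.filter (· ≤ P)).prod (· ^ ·)

lemma factorization_smoothPart (P d : ℕ) :
    (smoothPart P d).factorization = d.factorization.filter (· ≤ P) :=
  Nat.prod_pow_factorization_eq_self fun _ hp =>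
    Nat.prime_of_mem_primeFactors (mem_filter.mp hp).1

lemma smoothPart_ne_zero (P d : ℕ) : smoothPart P d ≠ 0 :=
  Finsupp.prod_ne_zero_iff.mpr fun _ hp =>
    pow_ne_zero _ (Nat.prime_of_mem_primeFactors (mem_filter.mp hp).1).ne_zero

lemma dvd_smoothPart_iff {P d q : ℕ} (hd : d ≠ 0) (hq : q ≠ 0) :
    q ∣ smoothPart P d ↔ q ∣ d ∧ IsSmooth P q := by
  rw [← Nat.factorization_le_iff_dvd hq (smoothPart_ne_zero P d),
    ← Nat.factorization_le_iff_dvd hq hd, isSmooth_iff_forall_mem_primeFactors hq,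
    factorization_smoothPart, Finsupp.le_iff, Finsupp.le_iff, Nat.support_factorization,
    ← forall₂_and]
  refine forall₂_congr fun p hp => ?_
  have hqp : q.factorization p ≠ 0 := Finsupp.mem_support_iff.mp hp
  by_cases hpP : p ≤ P <;> simp [hpP, hqp]

lemma filter_isSmooth_divisors {P d : ℕ} (hd : d ≠ 0) :
    {q ∈ d.divisors | IsSmooth P q} = (smoothPart P d).divisors := by
  ext q
  rcases eq_or_ne q 0 with rfl | hq
  · simp
  · simp [Nat.mem_divisors, dvd_smoothPart_iff hd hq, hd, smoothPart_ne_zero]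

lemma smoothPart_eq_self_of_le {P d : ℕ} (hd : d ≠ 0) (hdP : d ≤ P) : smoothPart P d = d := by
  refine Nat.eq_of_factorization_eq (smoothPart_ne_zero P d) hd fun p => ?_
  rw [factorization_smoothPart, Finsupp.filter_apply]
  split_ifs with hp
  · rfl
  · exact (Nat.factorization_eq_zero_of_lt (by omega)).symm

lemma sum_filter_isSmooth_dvd_ramanujanSum {P a d : ℕ} (ha : a ≠ 0) (hd : d ≠ 0) :
    ∑ q ∈ {q ∈ (a * primorial P).divisors | IsSmooth P q} with q ∣ d, ramanujanSum q a =
      if smoothPart P d ∣ a then (smoothPart P d : ℤ) else 0 := by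
  rw [← sum_divisors_ramanujanSum a _ (smoothPart_ne_zero P d), ← filter_isSmooth_divisors hd]
  refine sum_subset (fun q hq => ?_) (fun q hq hqN => ?_)
  · simp only [mem_filter, Nat.mem_divisors] at hq ⊢
    exact ⟨⟨hq.2, hd⟩, hq.1.2⟩
  · obtain ⟨hqd, hsm⟩ := mem_filter.mp hq
    refine ramanujanSum_eq_zero_of_not_dvd_mul_primorial ha (Nat.pos_of_mem_divisors hqd).ne' hsm
      fun h => hqN ?_
    simp only [mem_filter, Nat.mem_divisors] at hqd ⊢
    exact ⟨⟨⟨h, mul_ne_zero ha (primorial_ne_zero P)⟩, hsm⟩, hqd.1⟩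

lemma norm_ite_dvd_le {a : ℕ} (ha : a ≠ 0) (m : ℕ) :
    ‖if m ∣ a then (m : ℂ) else 0‖ ≤ a := by
  split_ifs with hm
  · simpa using Nat.le_of_dvd (Nat.pos_of_ne_zero ha) hm
  · simp

lemma tsum_eratosthenes_div_mul_ite_dvd (F : ℕ → ℂ) {a : ℕ} (ha : a ≠ 0) :
    ∑' d : ℕ, eratosthenes F d / d * (if d ∣ a then (d : ℂ) else 0) = F a := by
  rw [tsum_eq_sum (s := a.divisors) fun d hd => ?_, ← sum_divisors_eratosthenes F ha]
  · refine sum_congr rfl fun d hd => ?_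
    have hd0 : (d : ℂ) ≠ 0 := Nat.cast_ne_zero.mpr (Nat.pos_of_mem_divisors hd).ne'
    rw [if_pos (Nat.dvd_of_mem_divisors hd), div_mul_cancel₀ _ hd0]
  · rw [if_neg fun hda => hd (Nat.mem_divisors.mpr ⟨hda, ha⟩), mul_zero]

section Wintner

variable {F : ℕ → ℂ} (hWA : Summable fun d : ℕ => ‖eratosthenes F d‖ / d)
include hWA

lemma summable_winCoeff_terms (q : ℕ) :
    Summable fun d : ℕ => if q ∣ d then eratosthenes F d / d else 0 :=
  hWA.of_norm_bounded fun d => by split_ifs <;> simp [div_nonneg]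

lemma tsum_isSmooth_winCoeff_mul_ramanujanSum {a : ℕ} (ha : a ≠ 0) (P : ℕ) :
    (∑' q : ℕ, if 0 < q ∧ IsSmooth P q then winCoeff F q * (ramanujanSum q a : ℂ) else 0) =
      ∑' d : ℕ, eratosthenes F d / d *
        if smoothPart P d ∣ a then (smoothPart P d : ℂ) else 0 := by
  set T := {q ∈ (a * primorial P).divisors | IsSmooth P q}
  have hsupp : ∀ q ∉ T,
      (if 0 < q ∧ IsSmooth P q then winCoeff F q * (ramanujanSum q a : ℂ) else 0) = 0 := by
    intro q hqT
    split_ifs with hq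
    · rw [ramanujanSum_eq_zero_of_not_dvd_mul_primorial ha hq.1.ne' hq.2 fun h => hqT ?_,
        Int.cast_zero, mul_zero]
      simp only [T, mem_filter, Nat.mem_divisors]
      exact ⟨⟨h, mul_ne_zero ha (primorial_ne_zero P)⟩, hq.2⟩
    · rfl
  calc _ = ∑ q ∈ T, winCoeff F q * (ramanujanSum q a : ℂ) := by
        rw [tsum_eq_sum hsupp]
        refine sum_congr rfl fun q hq => if_pos ⟨Nat.pos_of_mem_divisors (mem_filter.mp hq).1,
          (mem_filter.mp hq).2⟩
    _ = ∑ q ∈ T, ∑' d : ℕ, (if q ∣ d then eratosthenes F d / d else 0) * ramanujanSum q a :=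
        sum_congr rfl fun q _ => tsum_mul_right.symm
    _ = ∑' d : ℕ, ∑ q ∈ T, (if q ∣ d then eratosthenes F d / d else 0) * ramanujanSum q a :=
        (Summable.tsum_finsetSum fun q _ => (summable_winCoeff_terms hWA q).mul_right _).symm
    _ = _ := tsum_congr fun d => ?_
  rcases eq_or_ne d 0 with rfl | hd
  · simp [eratosthenes_zero]
  simp only [ite_mul, zero_mul]
  rw [← sum_filter, ← mul_sum]
  congr 1
  exact_mod_cast sum_filter_isSmooth_dvd_ramanujanSum ha hd

lemma tendsto_tsum_smoothPart {a : ℕ} (ha : a ≠ 0) :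
    Tendsto (fun P : ℕ => ∑' d : ℕ, eratosthenes F d / d *
      if smoothPart P d ∣ a then (smoothPart P d : ℂ) else 0) atTop (nhds (F a)) := by
  rw [← tsum_eratosthenes_div_mul_ite_dvd F ha]
  refine tendsto_tsum_of_dominated_convergence (hWA.mul_left (a : ℝ)) (fun d => ?_)
    (Eventually.of_forall fun P d => ?_)
  · rcases eq_or_ne d 0 with rfl | hd
    · simp [eratosthenes_zero]
    · exact tendsto_const_nhds.congr' <| (eventually_ge_atTop d).mono fun P hP => by
        simp only [smoothPart_eq_self_of_le hd hP]
  · calc _ = ‖eratosthenes F d‖ / d * ‖if smoothPart P d ∣ a then (smoothPart P d : ℂ) else 0‖ := by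
          rw [norm_mul, norm_div, Complex.norm_natCast]
      _ ≤ ‖eratosthenes F d‖ / d * a := by gcongr; exact norm_ite_dvd_le ha _
      _ = _ := mul_comm _ _

end Wintner

/-- (Wintner's Dream Theorem.) If `F` satisfies the Wintner Assumption
`∑_d |F'(d)|/d < ∞`, then for every `a ≥ 1` the `P`-smooth partial sums of the
Ramanujan expansion with Wintner coefficients converge to `F(a)` as
`P → ∞` through the primes. -/
theorem stmt5 (F : ℕ → ℂ)
    (hWA : Summable (fun d : ℕ => ‖eratosthenes F d‖ / d))
    (a : ℕ) (ha : 0 < a) :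
    Tendsto
      (fun P : ℕ =>
        ∑' q : ℕ, if 0 < q ∧ IsSmooth P q then winCoeff F q * (ramanujanSum q a : ℂ) else 0)
      (atTop ⊓ Filter.principal {P : ℕ | P.Prime}) (nhds (F a)) :=
  ((tendsto_tsum_smoothPart hWA ha.ne').congr fun P =>
    (tsum_isSmooth_winCoeff_mul_ramanujanSum hWA ha.ne' P).symm).mono_left inf_le_left
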